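/- Let σ be the generator of Gal(Q(ζ₉)⁺/Q) determined by σ(cos(π/9)) = cos(5π/9), and let u₁ = ζ₉ - ζ₉² - ζ₉⁵, u₂ = 1 - ζ₉⁴ - ζ₉⁵. Then σ(u₁) = -u₁⁻¹u₂ and σ(u₂) = u₁⁻¹. -/

import Mathlib

/-!
Put `c = cos(π/9)`. The triple-angle formula gives `8c³ - 6c = 1`, and `cos(5π/9) = -cos(4π/9)`
reduces to `2c² - c - 1` modulo that cubic. Since `ζ₉³` is a primitive cube root of unity,
`ζ₉⁻¹ = -ζ₉² - ζ₉⁵`, so `u₁ = ζ₉ + ζ₉⁻¹ = 4c² - 2` and `u₂ = 1 - (ζ₉⁴ + ζ₉⁻⁴) = 1 + 2c`.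
Both claimed identities are then polynomial identities in `c` modulo `8c³ - 6c - 1`.
-/

noncomputable section

/-- `ζ₉ = exp(2πi/9)`. -/
def z9 : ℂ := Complex.exp (2 * Real.pi * Complex.I / 9)

/-- The totally real cubic field `Q(ζ₉)⁺ = Q(2cos(π/9))`, as a subfield of `ℂ`. -/
def Kplus : IntermediateField ℚ ℂ :=
  IntermediateField.adjoin ℚ {((2 * Real.cos (Real.pi / 9) : ℝ) : ℂ)}

def u1 : ℂ := z9 - z9 ^ 2 - z9 ^ 5

def u2 : ℂ := 1 - z9 ^ 4 - z9 ^ 5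

open Real

@[simp, norm_cast]
theorem AddSubmonoidWithOneClass.coe_ofNat {R S : Type*} [AddMonoidWithOne R] [SetLike S R]
    [AddSubmonoidWithOneClass S R] (s : S) (n : ℕ) [n.AtLeastTwo] :
    ((ofNat(n) : s) : R) = ofNat(n) :=
  rfl

namespace IsPrimitiveRoot

variable {K : Type*} [Field K] {z : K}

theorem one_add_pow_three_add_pow_six_eq_zero (hz : IsPrimitiveRoot z 9) :
    1 + z ^ 3 + z ^ 6 = 0 := by
  have := (hz.pow (by norm_num) (by norm_num : 9 = 3 * 3)).geom_sum_eq_zero (by norm_num)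
  simpa [Finset.sum_range_succ, ← pow_mul] using this

theorem inv_eq_neg_sq_sub_pow_five (hz : IsPrimitiveRoot z 9) : z⁻¹ = -z ^ 2 - z ^ 5 :=
  inv_eq_of_mul_eq_one_right <| by linear_combination -hz.one_add_pow_three_add_pow_six_eq_zero

theorem inv_pow_four_eq_pow_five (hz : IsPrimitiveRoot z 9) : (z ^ 4)⁻¹ = z ^ 5 :=
  inv_eq_of_mul_eq_one_right <| by rw [← pow_add]; exact hz.pow_eq_one

end IsPrimitiveRoot

theorem Complex.exp_mul_I_add_inv (x : ℝ) :
    Complex.exp (x * Complex.I) + (Complex.exp (x * Complex.I))⁻¹ = 2 * (Real.cos x : ℂ) := by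
  rw [← Complex.exp_neg, Complex.ofReal_cos, Complex.two_cos, neg_mul]

theorem cos_pi_div_nine_cubic : 8 * cos (π / 9) ^ 3 - 6 * cos (π / 9) = 1 := by
  have := cos_three_mul (π / 9)
  rw [show 3 * (π / 9) = π / 3 by ring, cos_pi_div_three] at this
  linarith

theorem cos_five_pi_div_nine :
    cos (5 * π / 9) = 2 * cos (π / 9) ^ 2 - cos (π / 9) - 1 := by
  rw [show 5 * π / 9 = π - 2 * (2 * (π / 9)) by ring, cos_pi_sub, cos_two_mul, cos_two_mul]
  linear_combination (-cos (π / 9)) * cos_pi_div_nine_cubic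

theorem isPrimitiveRoot_z9 : IsPrimitiveRoot z9 9 := by
  simpa [z9] using Complex.isPrimitiveRoot_exp 9 (by norm_num)

theorem z9_pow_eq_exp (k : ℕ) : z9 ^ k = Complex.exp ((2 * k * π / 9 : ℝ) * Complex.I) := by
  rw [z9, ← Complex.exp_nat_mul]; push_cast; ring_nf

theorem u1_eq : u1 = 4 * (cos (π / 9) : ℂ) ^ 2 - 2 := by
  have h := z9_pow_eq_exp 1
  rw [pow_one, Nat.cast_one, mul_one, show 2 * π / 9 = 2 * (π / 9) by ring] at h
  calc u1 = z9 + z9⁻¹ := by rw [isPrimitiveRoot_z9.inv_eq_neg_sq_sub_pow_five, u1]; ring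
    _ = 4 * (cos (π / 9) : ℂ) ^ 2 - 2 := by
      rw [h, Complex.exp_mul_I_add_inv, cos_two_mul]; push_cast; ring

theorem u2_eq : u2 = 1 + 2 * (cos (π / 9) : ℂ) := by
  have h := z9_pow_eq_exp 4
  rw [show 2 * ((4 : ℕ) : ℝ) * π / 9 = π - π / 9 by push_cast; ring] at h
  calc u2 = 1 - (z9 ^ 4 + (z9 ^ 4)⁻¹) := by
        rw [isPrimitiveRoot_z9.inv_pow_four_eq_pow_five, u2]; ring
    _ = 1 + 2 * (cos (π / 9) : ℂ) := by
      rw [h, Complex.exp_mul_I_add_inv, cos_pi_sub]; push_cast; ring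

theorem RingHom.map_units_of_cubic {F : Type*} [Field F] (σ : F →+* F) {c : F}
    (hc : 8 * c ^ 3 - 6 * c = 1) (hσ : σ c = 2 * c ^ 2 - c - 1) :
    σ (4 * c ^ 2 - 2) = -(4 * c ^ 2 - 2)⁻¹ * (1 + 2 * c) ∧
      σ (1 + 2 * c) = (4 * c ^ 2 - 2)⁻¹ := by
  have hinv : (4 * c ^ 2 - 2)⁻¹ = 1 + 2 * (2 * c ^ 2 - c - 1) :=
    inv_eq_of_mul_eq_one_right <| by linear_combination (2 * c - 1) * hc
  refine ⟨?_, by rw [hinv, map_add, map_mul, map_one, map_ofNat, hσ]⟩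
  rw [hinv, map_sub, map_mul, map_pow, map_ofNat, map_ofNat, hσ]
  linear_combination (2 * c - 1) * hc

/-- If `σ` is the Galois automorphism of `Q(ζ₉)⁺` sending `cos(π/9)` to `cos(5π/9)`, then
`σ(u₁) = -u₁⁻¹u₂` and `σ(u₂) = u₁⁻¹`. -/
theorem stmt3 (σ : Kplus ≃ₐ[ℚ] Kplus) (c c5 U1 U2 : Kplus)
    (hc : (c : ℂ) = ((Real.cos (Real.pi / 9) : ℝ) : ℂ))
    (hc5 : (c5 : ℂ) = ((Real.cos (5 * Real.pi / 9) : ℝ) : ℂ))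
    (hU1 : (U1 : ℂ) = u1) (hU2 : (U2 : ℂ) = u2)
    (hσ : σ c = c5) :
    σ U1 = -U1⁻¹ * U2 ∧ σ U2 = U1⁻¹ := by
  have hcubic : 8 * c ^ 3 - 6 * c = 1 :=
    Subtype.ext <| by
      push_cast; rw [hc, ← Complex.ofReal_one, ← cos_pi_div_nine_cubic]; push_cast; ring
  have hσc : σ c = 2 * c ^ 2 - c - 1 :=
    hσ.trans <| Subtype.ext <| by
      push_cast; rw [hc, hc5, cos_five_pi_div_nine]; push_cast; ring
  obtain rfl : U1 = 4 * c ^ 2 - 2 := Subtype.ext <| by push_cast [hU1, hc, u1_eq]; rfl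
  obtain rfl : U2 = 1 + 2 * c := Subtype.ext <| by push_cast [hU2, hc, u2_eq]; rfl
  exact (σ : Kplus →+* Kplus).map_units_of_cubic hcubic hσc
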